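/- All four eigenvalues e₁ = 8x(1−x²)(1+x²)²/(1+2x−x²)⁴, e₂ = 8x(1−x²)(1+x²)²/(1−6x²+x⁴)², e₃ = 8x(1+x²)²(−1+4x+x²)/(1+2x−x²)⁴, and e₄ = 8x(1+x²)²(3−6x+2x²+6x³+3x⁴)/((1+2x−x²)³(1+2x+x²)²) are simultaneously strictly positive if and only if x lies in the open interval (√5 − 2, √2 − 1), assuming x ∈ (0, √2 − 1). -/

import Mathlib

/-!
On `0 < x < √2 - 1` the denominators are positive (`1 - 6x² + x⁴` factors as
`(x² + 2x - 1)(x² - 2x - 1)`, a product of two negative numbers) and so are the numerators of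
`e₁`, `e₂` and `e₄`, the quartic factor of `e₄` being positive on all of `ℝ`. Hence only `e₃`
can change sign, through its factor `-1 + 4x + x² = (x + 2)² - 5`, which is positive exactly
when `x > √5 - 2`.
-/

namespace DualNOPA

lemma lt_one_of_lt_sqrt_two_sub_one {x : ℝ} (hx : x < √2 - 1) : x < 1 := by
  have : √2 < 2 := by
    rw [Real.sqrt_lt' two_pos]
    norm_num
  linarith

lemma sq_add_two_mul_sub_one_neg {x : ℝ} (hx0 : -1 ≤ x) (hx1 : x < √2 - 1) :
    x ^ 2 + 2 * x - 1 < 0 := by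
  have h : x + 1 < √2 := by linarith
  rw [Real.lt_sqrt (by linarith)] at h
  linarith

lemma one_add_two_mul_sub_sq_pos {x : ℝ} (hx0 : 0 ≤ x) (hx1 : x < 1) :
    0 < 1 + 2 * x - x ^ 2 := by
  nlinarith

lemma one_sub_six_mul_sq_add_pow_four_pos {x : ℝ} (hx0 : 0 ≤ x) (hx1 : x < √2 - 1) :
    0 < 1 - 6 * x ^ 2 + x ^ 4 := by
  have hneg₁ := sq_add_two_mul_sub_one_neg (by linarith) hx1
  have hneg₂ : x ^ 2 - 2 * x - 1 < 0 := by
    nlinarith [lt_one_of_lt_sqrt_two_sub_one hx1]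
  calc (0 : ℝ) < (x ^ 2 + 2 * x - 1) * (x ^ 2 - 2 * x - 1) := mul_pos_of_neg_of_neg hneg₁ hneg₂
    _ = 1 - 6 * x ^ 2 + x ^ 4 := by ring

lemma quartic_pos (x : ℝ) : 0 < 3 - 6 * x + 2 * x ^ 2 + 6 * x ^ 3 + 3 * x ^ 4 := by
  have : 3 - 6 * x + 2 * x ^ 2 + 6 * x ^ 3 + 3 * x ^ 4
      = 3 * (x ^ 2 + x - 1 / 2) ^ 2 + 2 * (x - 3 / 4) ^ 2 + 9 / 8 := by ring
  rw [this]
  positivity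

lemma sqrt_five_sub_two_lt_iff {x : ℝ} (hx : -2 < x) :
    √5 - 2 < x ↔ 0 < -1 + 4 * x + x ^ 2 := by
  rw [sub_lt_iff_lt_add, Real.sqrt_lt' (by linarith)]
  constructor <;> intro h <;> nlinarith

end DualNOPA

open DualNOPA in
theorem stmt_4 (x : ℝ) (hx0 : 0 < x) (hx1 : x < Real.sqrt 2 - 1) :
    (0 < 8 * x * (1 - x ^ 2) * (1 + x ^ 2) ^ 2 / (1 + 2 * x - x ^ 2) ^ 4 ∧
     0 < 8 * x * (1 - x ^ 2) * (1 + x ^ 2) ^ 2 / (1 - 6 * x ^ 2 + x ^ 4) ^ 2 ∧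
     0 < 8 * x * (1 + x ^ 2) ^ 2 * (-1 + 4 * x + x ^ 2) / (1 + 2 * x - x ^ 2) ^ 4 ∧
     0 < 8 * x * (1 + x ^ 2) ^ 2 * (3 - 6 * x + 2 * x ^ 2 + 6 * x ^ 3 + 3 * x ^ 4) /
         ((1 + 2 * x - x ^ 2) ^ 3 * (1 + 2 * x + x ^ 2) ^ 2)) ↔
    (Real.sqrt 5 - 2 < x ∧ x < Real.sqrt 2 - 1) := by
  have hx1' : x < 1 := lt_one_of_lt_sqrt_two_sub_one hx1
  have hd := one_add_two_mul_sub_sq_pos hx0.le hx1'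
  have hd' := one_sub_six_mul_sq_add_pow_four_pos hx0.le hx1
  have hc : 0 < 8 * x * (1 + x ^ 2) ^ 2 := by positivity
  have h1 : 0 < 8 * x * (1 - x ^ 2) * (1 + x ^ 2) ^ 2 := by
    have : 0 < 1 - x ^ 2 := by nlinarith
    positivity
  have e₁ := div_pos h1 (pow_pos hd 4)
  have e₂ := div_pos h1 (pow_pos hd' 2)
  have e₄ : 0 < 8 * x * (1 + x ^ 2) ^ 2 * (3 - 6 * x + 2 * x ^ 2 + 6 * x ^ 3 + 3 * x ^ 4) /
      ((1 + 2 * x - x ^ 2) ^ 3 * (1 + 2 * x + x ^ 2) ^ 2) :=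
    div_pos (mul_pos hc (quartic_pos x)) (by positivity)
  rw [and_iff_right e₁, and_iff_right e₂, and_iff_left e₄, div_pos_iff_of_pos_right (by positivity),
    mul_pos_iff_of_pos_left hc, sqrt_five_sub_two_lt_iff (by linarith)]
  exact (and_iff_left hx1).symm
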